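/- arXiv:1203.4926 — 6 statements merged into one kernel-verified Lean document; each statement's English description precedes it below -/
import Mathlib

section
/- Let R be a commutative ring and A a commutative R-algebra. The map from nil(A) to N_R(A) sending a nilpotent element n of A to the class of (0,n) is an injective homomorphism of non-unital rings whose image is exactly the nilradical of N_R(A); in particular it induces an isomorphism of non-unital rings nil(A) ≅ nil(N_R(A)). -/
variable (R A : Type*) [CommRing R] [CommRing A] [Algebra R A]

/-- The subring `T = {(r,a) ∈ R × A : a - r·1_A ∈ nil(A)}` of `R × A`. -/
def NRT : Subring (R × A) where
  carrier := {x | x.2 - algebraMap R A x.1 ∈ nilradical A}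
  one_mem' := by simp
  zero_mem' := by simp
  mul_mem' := by
    intro x y hx hy
    show x.2 * y.2 - algebraMap R A (x.1 * y.1) ∈ nilradical A
    have h : x.2 * y.2 - algebraMap R A (x.1 * y.1)
        = x.2 * (y.2 - algebraMap R A y.1)
          + algebraMap R A y.1 * (x.2 - algebraMap R A x.1) := by
      rw [map_mul]; ring
    rw [h]
    exact add_mem (Ideal.mul_mem_left _ _ hy) (Ideal.mul_mem_left _ _ hx)
  add_mem' := by
    intro x y hx hy
    show x.2 + y.2 - algebraMap R A (x.1 + y.1) ∈ nilradical A
    have h : x.2 + y.2 - algebraMap R A (x.1 + y.1)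
        = (x.2 - algebraMap R A x.1) + (y.2 - algebraMap R A y.1) := by
      rw [map_add]; ring
    rw [h]
    exact add_mem hx hy
  neg_mem' := by
    intro x hx
    show -x.2 - algebraMap R A (-x.1) ∈ nilradical A
    have h : -x.2 - algebraMap R A (-x.1) = -(x.2 - algebraMap R A x.1) := by
      rw [map_neg]; ring
    rw [h]
    exact neg_mem hx

/-- The ideal `I = {(r,0) : r ∈ nil(R)}` of `T`. -/
def NRI : Ideal (NRT R A) where
  carrier := {x | x.val.2 = 0 ∧ x.val.1 ∈ nilradical R}
  add_mem' := by
    intro x y hx hy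
    exact ⟨by show x.val.2 + y.val.2 = 0; rw [hx.1, hy.1, add_zero], add_mem hx.2 hy.2⟩
  zero_mem' := ⟨rfl, zero_mem _⟩
  smul_mem' := by
    intro c x hx
    refine ⟨?_, Ideal.mul_mem_left _ _ hx.2⟩
    show c.val.2 * x.val.2 = 0
    rw [hx.1, mul_zero]

/-- `N_R(A) = T/I`. -/
def NRA := NRT R A ⧸ NRI R A

noncomputable instance : CommRing (NRA R A) := Ideal.Quotient.commRing (NRI R A)

/-- The unit map `R → T`, `r ↦ (r, r·1_A)`. -/
def NRunit : R →+* NRT R A where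
  toFun r := ⟨(r, algebraMap R A r), show algebraMap R A r - algebraMap R A r ∈ nilradical A by simp⟩
  map_one' := by apply Subtype.ext; simp [Prod.ext_iff]
  map_mul' r s := by apply Subtype.ext; simp [Prod.ext_iff]
  map_zero' := by apply Subtype.ext; simp [Prod.ext_iff]
  map_add' r s := by apply Subtype.ext; simp [Prod.ext_iff]

/-- The `R`-algebra structure on `N_R(A)`, `r ↦ class of (r, r·1_A)`. -/
noncomputable instance : Algebra R (NRA R A) :=
  ((Ideal.Quotient.mk (NRI R A)).comp (NRunit R A)).toAlgebra

/-- The canonical `R`-algebra map `ε_A : N_R(A) → A` induced by `(r,a) ↦ a`. -/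
noncomputable def NReps : NRA R A →ₐ[R] A :=
  { Ideal.Quotient.lift (NRI R A) ((RingHom.snd R A).comp (NRT R A).subtype)
      (fun x hx => hx.1) with
    commutes' := fun r => rfl }

/-- The map `nil(A) → N_R(A)`, `n ↦ class of (0, n)`. -/
noncomputable def nilToNRA (n : nilradical A) : NRA R A :=
  Ideal.Quotient.mk (NRI R A) ⟨((0 : R), (n : A)), show (n : A) - algebraMap R A 0 ∈ nilradical A by simpa using n.2⟩

/-!
Every element `(r, 0)` of `I` with `r` nilpotent is itself nilpotent, so a class in `T ⧸ I` is
nilpotent exactly when its representative `(r, a)` is, i.e. when both `r` and `a` are nilpotent.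
For such a class, `(r, a) ≡ (0, a)` modulo `I`, so it is the image of `a ∈ nil(A)`; and
`(0, x) ≡ (0, y)` modulo `I` forces `x = y`, since elements of `I` have second coordinate `0`.
-/

theorem Prod.isNilpotent_iff {M N : Type*} [MonoidWithZero M] [MonoidWithZero N] {x : M × N} :
    IsNilpotent x ↔ IsNilpotent x.1 ∧ IsNilpotent x.2 := by
  constructor
  · rintro ⟨n, hn⟩
    exact ⟨⟨n, congrArg Prod.fst hn⟩, ⟨n, congrArg Prod.snd hn⟩⟩
  · rintro ⟨⟨m, hm⟩, ⟨n, hn⟩⟩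
    refine ⟨m + n, Prod.ext ?_ ?_⟩
    · exact pow_eq_zero_of_le (Nat.le_add_right m n) hm
    · exact pow_eq_zero_of_le (Nat.le_add_left n m) hn

theorem Ideal.Quotient.isNilpotent_mk_iff_of_le_nilradical {S : Type*} [CommRing S] {I : Ideal S}
    (hI : I ≤ nilradical S) {x : S} : IsNilpotent (Ideal.Quotient.mk I x) ↔ IsNilpotent x := by
  refine ⟨fun ⟨n, hn⟩ => ?_, fun h => h.map _⟩
  rw [← map_pow, Ideal.Quotient.eq_zero_iff_mem] at hn
  exact (mem_nilradical.mp (hI hn)).of_pow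

/-- `NRA` is not reducible, so rewriting with `Ideal.Quotient.mk (NRI R A)`, whose codomain is
`T ⧸ I`, produces ill-typed terms; this copy has codomain `NRA R A`. -/
noncomputable abbrev NRmk : NRT R A →+* NRA R A := Ideal.Quotient.mk (NRI R A)

theorem NRmk_surjective : Function.Surjective (NRmk R A) := Ideal.Quotient.mk_surjective

theorem mk_zero_mem_NRT {a : A} (ha : a ∈ nilradical A) : ((0 : R), a) ∈ NRT R A := by
  simpa [NRT] using ha

theorem nilToNRA_eq_NRmk (n : nilradical A) :
    nilToNRA R A n = NRmk R A ⟨(0, n), mk_zero_mem_NRT R A n.2⟩ := rfl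

theorem isNilpotent_NRT_iff (t : NRT R A) :
    IsNilpotent t ↔ IsNilpotent t.val.1 ∧ IsNilpotent t.val.2 := by
  rw [← IsNilpotent.map_iff (f := (NRT R A).subtype) Subtype.val_injective, Prod.isNilpotent_iff]
  rfl

theorem NRI_le_nilradical : NRI R A ≤ nilradical (NRT R A) := fun t ⟨h2, h1⟩ => by
  rw [mem_nilradical, isNilpotent_NRT_iff, h2]
  exact ⟨mem_nilradical.mp h1, IsNilpotent.zero⟩

theorem isNilpotent_NRmk_iff (t : NRT R A) :
    IsNilpotent (NRmk R A t) ↔ IsNilpotent t.val.1 ∧ IsNilpotent t.val.2 :=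
  (Ideal.Quotient.isNilpotent_mk_iff_of_le_nilradical (NRI_le_nilradical R A)).trans
    (isNilpotent_NRT_iff R A t)

theorem NRmk_eq_nilToNRA (t : NRT R A) (h1 : t.val.1 ∈ nilradical R)
    (h2 : t.val.2 ∈ nilradical A) :
    NRmk R A t = nilToNRA R A ⟨t.val.2, h2⟩ :=
  Ideal.Quotient.eq.mpr ⟨sub_self t.val.2, by simpa using h1⟩

theorem nilToNRA_add (x y : A) (hx : x ∈ nilradical A) (hy : y ∈ nilradical A) :
    nilToNRA R A ⟨x + y, add_mem hx hy⟩ = nilToNRA R A ⟨x, hx⟩ + nilToNRA R A ⟨y, hy⟩ := by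
  simp only [nilToNRA_eq_NRmk, ← map_add]
  congr 1
  ext <;> simp

theorem nilToNRA_mul (x y : A) (hx : x ∈ nilradical A) (hy : y ∈ nilradical A) :
    nilToNRA R A ⟨x * y, Ideal.mul_mem_left _ _ hy⟩
      = nilToNRA R A ⟨x, hx⟩ * nilToNRA R A ⟨y, hy⟩ := by
  simp only [nilToNRA_eq_NRmk, ← map_mul]
  congr 1
  ext <;> simp

theorem nilToNRA_injective : Function.Injective (nilToNRA R A) := by
  rintro ⟨x, hx⟩ ⟨y, hy⟩ h
  exact Subtype.ext (sub_eq_zero.mp (Ideal.Quotient.eq.mp h).1)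

theorem isNilpotent_nilToNRA (n : nilradical A) : IsNilpotent (nilToNRA R A n) := by
  rw [nilToNRA_eq_NRmk, isNilpotent_NRmk_iff]
  exact ⟨IsNilpotent.zero, mem_nilradical.mp n.2⟩

theorem range_nilToNRA : Set.range (nilToNRA R A) = (nilradical (NRA R A) : Set (NRA R A)) := by
  ext z
  refine ⟨?_, fun hz => ?_⟩
  · rintro ⟨n, rfl⟩
    exact mem_nilradical.mpr (isNilpotent_nilToNRA R A n)
  · obtain ⟨t, rfl⟩ := NRmk_surjective R A z
    obtain ⟨h1, h2⟩ := (isNilpotent_NRmk_iff R A t).mp (mem_nilradical.mp hz)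
    exact ⟨_, (NRmk_eq_nilToNRA R A t (mem_nilradical.mpr h1) (mem_nilradical.mpr h2)).symm⟩

theorem stmt0 :
    (∀ (x y : A) (hx : x ∈ nilradical A) (hy : y ∈ nilradical A),
      nilToNRA R A ⟨x + y, add_mem hx hy⟩ = nilToNRA R A ⟨x, hx⟩ + nilToNRA R A ⟨y, hy⟩) ∧
    (∀ (x y : A) (hx : x ∈ nilradical A) (hy : y ∈ nilradical A),
      nilToNRA R A ⟨x * y, Ideal.mul_mem_left _ _ hy⟩
        = nilToNRA R A ⟨x, hx⟩ * nilToNRA R A ⟨y, hy⟩) ∧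
    Function.Injective (nilToNRA R A) ∧
    Set.range (nilToNRA R A) = (nilradical (NRA R A) : Set (NRA R A)) :=
  ⟨nilToNRA_add R A, nilToNRA_mul R A, nilToNRA_injective R A, range_nilToNRA R A⟩
end

section
/- Let R be a commutative ring. For every commutative R-algebra A, the canonical map ε_{N_R(A)} : N_R(N_R(A)) → N_R(A) is an isomorphism of R-algebras; that is, N_R takes values in the full subcategory C of commutative R-algebras B for which ε_B : N_R(B) → B is an isomorphism. -/
/-!
The map `ε_A` is surjective as soon as every element of `A` is congruent to some `r·1_A` modulo
`nil(A)`, and injective as soon as `r·1_A` nilpotent forces `r` nilpotent. In `N_R(A)` the class of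
`(r, a)` is nilpotent exactly when `r` is (then `a = (a - r·1_A) + r·1_A` is nilpotent too), so
`r·1 - [(r, a)] = [(0, r·1_A - a)]` is nilpotent and `[(r, r·1_A)]` is nilpotent only for nilpotent
`r`: both criteria hold for `N_R(A)`.
-/

variable (R A : Type*) [CommRing R] [CommRing A] [Algebra R A]

lemma Prod.isNilpotent_mk {M N : Type*} [MonoidWithZero M] [MonoidWithZero N] {a : M} {b : N}
    (ha : IsNilpotent a) (hb : IsNilpotent b) : IsNilpotent (a, b) := by
  obtain ⟨m, hm⟩ := ha
  obtain ⟨n, hn⟩ := hb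
  exact ⟨m + n, Prod.ext (pow_eq_zero_of_le (Nat.le_add_right m n) hm)
    (pow_eq_zero_of_le (Nat.le_add_left n m) hn)⟩

/-- `Ideal.Quotient.mk`, but landing in `NRA R A`, whose ring instance is not syntactically that
of the quotient, so that rewriting with `map_sub`, `map_pow` works. -/
noncomputable def NRA.mk : NRT R A →+* NRA R A := Ideal.Quotient.mk (NRI R A)

lemma NRA.mk_eq_zero_iff (x : NRT R A) : NRA.mk R A x = 0 ↔ x ∈ NRI R A :=
  Ideal.Quotient.eq_zero_iff_mem

section

variable {R A}

lemma NReps_injective (h : ∀ r : R, IsNilpotent (algebraMap R A r) → IsNilpotent r) :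
    Function.Injective (NReps R A) := by
  rw [injective_iff_map_eq_zero]
  intro x hx
  obtain ⟨t, rfl⟩ := Ideal.Quotient.mk_surjective x
  have h2 : t.val.2 = 0 := hx
  have h1 : IsNilpotent (algebraMap R A t.val.1) := by
    simpa [h2] using (mem_nilradical.mp t.2).neg
  exact Ideal.Quotient.eq_zero_iff_mem.mpr ⟨h2, mem_nilradical.mpr (h _ h1)⟩

lemma NReps_surjective (h : ∀ a : A, ∃ r : R, IsNilpotent (a - algebraMap R A r)) :
    Function.Surjective (NReps R A) := by
  intro a
  obtain ⟨r, hr⟩ := h a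
  exact ⟨Ideal.Quotient.mk _ ⟨(r, a), mem_nilradical.mpr hr⟩, rfl⟩

lemma NRA.isNilpotent_mk_iff (x : NRT R A) :
    IsNilpotent (NRA.mk R A x) ↔ IsNilpotent x.val.1 := by
  constructor
  · rintro ⟨k, hk⟩
    rw [← map_pow, NRA.mk_eq_zero_iff] at hk
    have hpow : IsNilpotent ((x ^ k).val.1) := mem_nilradical.mp hk.2
    rw [SubmonoidClass.coe_pow, Prod.pow_fst] at hpow
    exact hpow.of_pow
  · intro h
    have h2 : IsNilpotent x.val.2 := by
      simpa using (Commute.all _ _).isNilpotent_add (mem_nilradical.mp x.2)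
        (h.map (algebraMap R A))
    have hx : IsNilpotent x :=
      (IsNilpotent.map_iff (NRT R A).subtype_injective).mp (Prod.isNilpotent_mk h h2)
    exact hx.map _

lemma NRA.isNilpotent_of_isNilpotent_algebraMap {r : R}
    (h : IsNilpotent (algebraMap R (NRA R A) r)) : IsNilpotent r :=
  (NRA.isNilpotent_mk_iff (NRunit R A r)).mp h

lemma NRA.exists_isNilpotent_sub_algebraMap (x : NRA R A) :
    ∃ r : R, IsNilpotent (x - algebraMap R (NRA R A) r) := by
  obtain ⟨t, rfl⟩ := Ideal.Quotient.mk_surjective x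
  change ∃ r : R, IsNilpotent (NRA.mk R A t - _)
  refine ⟨t.val.1, ?_⟩
  rw [show algebraMap R (NRA R A) t.val.1 = NRA.mk R A (NRunit R A t.val.1) from rfl,
    ← map_sub, NRA.isNilpotent_mk_iff]
  exact ⟨1, (pow_one _).trans (sub_self t.val.1)⟩

end

theorem stmt1 : Function.Bijective (NReps R (NRA R A)) :=
  ⟨NReps_injective fun _ => NRA.isNilpotent_of_isNilpotent_algebraMap,
    NReps_surjective NRA.exists_isNilpotent_sub_algebraMap⟩
end

section
/- Let R be a commutative ring, let B be a commutative R-algebra such that the canonical map ε_B : N_R(B) → B is an isomorphism, and let A be any commutative R-algebra. Then composition with ε_A : N_R(A) → A gives a bijection from the set of R-algebra homomorphisms B → N_R(A) to the set of R-algebra homomorphisms B → A; that is, N_R is right adjoint to the inclusion of the subcategory C of R-algebras on which ε is an isomorphism. -/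
variable (R A : Type*) [CommRing R] [CommRing A] [Algebra R A]

/-!
An element of `N_R(A)` is determined by its image under `ε_A` together with the class of its
`R`-component in the reduced ring `R ⧸ nil(R)`. If `ε_B` is surjective, every `b ∈ B` is a scalar
`r` plus a nilpotent, so any `R`-algebra map from `B` to a reduced ring sends `b` to the image of
`r`; hence a map `B → N_R(A)` is determined by its composite with `ε_A`. Conversely `N_R` is a
functor and `ε` is natural, so `f : B → A` lifts to `N_R(f) ∘ ε_B⁻¹`.
-/

variable {R A}

section

variable {B : Type*} [CommRing B] [Algebra R B]

instance : IsReduced (R ⧸ nilradical R) :=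
  (Ideal.isRadical_iff_quotient_reduced _).mp (Ideal.radical_isRadical 0)

lemma NReps_mk (t : NRT R A) : NReps R A (Ideal.Quotient.mk (NRI R A) t) = t.val.2 := rfl

noncomputable def NRpi : NRA R A →ₐ[R] R ⧸ nilradical R :=
  { Ideal.Quotient.lift (NRI R A)
      ((Ideal.Quotient.mk (nilradical R)).comp ((RingHom.fst R A).comp (NRT R A).subtype))
      (fun _ hx => Ideal.Quotient.eq_zero_iff_mem.mpr hx.2) with
    commutes' := fun _ => rfl }

lemma NRpi_mk (t : NRT R A) :
    NRpi (Ideal.Quotient.mk (NRI R A) t) = Ideal.Quotient.mk (nilradical R) t.val.1 := rfl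

lemma NRA.ext {x y : NRA R A} (heps : NReps R A x = NReps R A y) (hpi : NRpi x = NRpi y) :
    x = y := by
  obtain ⟨t, rfl⟩ := Ideal.Quotient.mk_surjective x
  obtain ⟨s, rfl⟩ := Ideal.Quotient.mk_surjective y
  rw [NReps_mk, NReps_mk] at heps
  rw [NRpi_mk, NRpi_mk, Ideal.Quotient.eq] at hpi
  exact Ideal.Quotient.eq.mpr ⟨sub_eq_zero.mpr heps, hpi⟩

lemma exists_sub_algebraMap_mem_nilradical_of_surjective
    (hB : Function.Surjective (NReps R B)) (b : B) :
    ∃ r : R, b - algebraMap R B r ∈ nilradical B := by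
  obtain ⟨x, rfl⟩ := hB b
  obtain ⟨t, rfl⟩ := Ideal.Quotient.mk_surjective x
  exact ⟨t.val.1, t.property⟩

lemma AlgHom.apply_eq_algebraMap_of_sub_mem_nilradical {C : Type*} [CommRing C] [Algebra R C]
    [IsReduced C] (φ : B →ₐ[R] C) {b : B} {r : R}
    (h : b - algebraMap R B r ∈ nilradical B) : φ b = algebraMap R C r := by
  have h0 : φ (b - algebraMap R B r) = 0 :=
    IsReduced.eq_zero _ ((mem_nilradical.mp h).map φ)
  rwa [map_sub, φ.commutes, sub_eq_zero] at h0

lemma NReps_comp_injective (hB : Function.Surjective (NReps R B)) :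
    Function.Injective fun f : B →ₐ[R] NRA R A => (NReps R A).comp f := by
  intro f g hfg
  ext b
  obtain ⟨r, hr⟩ := exists_sub_algebraMap_mem_nilradical_of_surjective hB b
  refine NRA.ext (AlgHom.congr_fun hfg b) ?_
  exact ((NRpi.comp f).apply_eq_algebraMap_of_sub_mem_nilradical hr).trans
    ((NRpi.comp g).apply_eq_algebraMap_of_sub_mem_nilradical hr).symm

lemma prodMap_mem_NRT (f : B →ₐ[R] A) {x : R × B} (hx : x ∈ NRT R B) :
    (x.1, f x.2) ∈ NRT R A := by
  change f x.2 - algebraMap R A x.1 ∈ nilradical A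
  rw [← f.commutes, ← map_sub]
  exact (mem_nilradical.mp hx).map f

noncomputable def NRmap (f : B →ₐ[R] A) : NRA R B →ₐ[R] NRA R A :=
  { Ideal.quotientMap (NRI R A)
      (((RingHom.id R).prodMap f.toRingHom).restrict (NRT R B) (NRT R A)
        fun _ hx => prodMap_mem_NRT f hx)
      fun _ (hx : _ ∈ NRI R B) =>
        Ideal.mem_comap.mpr ⟨(congrArg f hx.1).trans (map_zero f), hx.2⟩ with
    commutes' := fun r =>
      congrArg (Ideal.Quotient.mk _) (Subtype.ext (Prod.ext rfl (f.commutes r))) }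

lemma NReps_comp_NRmap (f : B →ₐ[R] A) :
    (NReps R A).comp (NRmap f) = f.comp (NReps R B) := by
  ext x
  obtain ⟨t, rfl⟩ := Ideal.Quotient.mk_surjective x
  rfl

lemma NReps_comp_surjective (hB : Function.Bijective (NReps R B)) :
    Function.Surjective fun f : B →ₐ[R] NRA R A => (NReps R A).comp f := by
  intro f
  let e := AlgEquiv.ofBijective (NReps R B) hB
  refine ⟨(NRmap f).comp (e.symm : B →ₐ[R] NRA R B), ?_⟩
  ext b
  exact (AlgHom.congr_fun (NReps_comp_NRmap f) (e.symm b)).trans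
    (congrArg f (e.apply_symm_apply b))

end

theorem stmt2 (B : Type*) [CommRing B] [Algebra R B]
    (hB : Function.Bijective (NReps R B)) :
    Function.Bijective fun f : B →ₐ[R] NRA R A => (NReps R A).comp f :=
  ⟨NReps_comp_injective hB.2, NReps_comp_surjective hB⟩
end

section
/- Let R be a commutative ring whose additive group is ℤ-torsion-free, and let Φ be a right exact functor from nilpotent R-algebras to abelian groups which is exact on nilpotent R-algebras whose underlying additive groups are ℚ-vector spaces and exact on nilpotent R-algebras with vanishing square. Then for every nilpotent R-algebra N whose additive group is ℤ-torsion-free, the homomorphism Φ(N) → Φ(N ⊗_ℤ ℚ) induced by the canonical map n ↦ n ⊗ 1 is injective. -/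
universe u v

/-- Product of `n+1` elements of a (possibly non-unital) multiplicative structure. -/
def nprod {N : Type u} [Mul N] : (n : ℕ) → (Fin (n + 1) → N) → N
  | 0, f => f 0
  | n + 1, f => f 0 * nprod n fun i => f i.succ

/-- A bundled nilpotent `R`-algebra: a non-unital commutative `R`-algebra `N`
such that every product of `k` elements vanishes, for some `k ≥ 1`. -/
structure NilpAlg (R : Type u) [CommRing R] : Type (u + 1) where
  carrier : Type u
  [nonUnitalCommRing : NonUnitalCommRing carrier]
  [module : Module R carrier]
  [isScalarTower : IsScalarTower R carrier carrier]
  [smulCommClass : SMulCommClass R carrier carrier]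
  nilpotent : ∃ k : ℕ, ∀ f : Fin (k + 1) → carrier, nprod k f = 0

attribute [instance] NilpAlg.nonUnitalCommRing NilpAlg.module NilpAlg.isScalarTower
  NilpAlg.smulCommClass

variable {R : Type u} [CommRing R]

/-- `0 → N₁ → N₂ → N₃ → 0` is a short exact sequence of nilpotent `R`-algebras
(exactness being measured on underlying modules/additive groups). -/
def IsSES {N₁ N₂ N₃ : NilpAlg R} (i : N₁.carrier →ₙₐ[R] N₂.carrier)
    (p : N₂.carrier →ₙₐ[R] N₃.carrier) : Prop :=
  Function.Injective i ∧ Function.Surjective p ∧ ∀ x : N₂.carrier, p x = 0 ↔ x ∈ Set.range i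

/-- A functor from nilpotent `R`-algebras to abelian groups. -/
structure AbFunctor (R : Type u) [CommRing R] : Type (max (u + 1) (v + 1)) where
  obj : NilpAlg R → Type v
  [addCommGroup : ∀ N, AddCommGroup (obj N)]
  map : ∀ {N₁ N₂ : NilpAlg R}, (N₁.carrier →ₙₐ[R] N₂.carrier) → (obj N₁ →+ obj N₂)
  map_id : ∀ N : NilpAlg R, map (NonUnitalAlgHom.id R N.carrier) = AddMonoidHom.id (obj N)
  map_comp : ∀ {N₁ N₂ N₃ : NilpAlg R} (f : N₁.carrier →ₙₐ[R] N₂.carrier)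
    (g : N₂.carrier →ₙₐ[R] N₃.carrier), map (g.comp f) = (map g).comp (map f)

attribute [instance] AbFunctor.addCommGroup

/-- `Φ` is right exact: every short exact sequence `0 → N₁ → N₂ → N₃ → 0` yields an
exact sequence `Φ(N₁) → Φ(N₂) → Φ(N₃) → 0` of abelian groups. -/
def AbFunctor.RightExact (Φ : AbFunctor.{u, v} R) : Prop :=
  ∀ {N₁ N₂ N₃ : NilpAlg R} (i : N₁.carrier →ₙₐ[R] N₂.carrier)
    (p : N₂.carrier →ₙₐ[R] N₃.carrier), IsSES i p →
      Function.Surjective (Φ.map p) ∧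
      ∀ y : Φ.obj N₂, Φ.map p y = 0 ↔ y ∈ Set.range (Φ.map i)

/-- `Φ` is exact on short exact sequences all of whose terms satisfy `P`:
the induced sequence `0 → Φ(N₁) → Φ(N₂) → Φ(N₃) → 0` is exact. -/
def AbFunctor.ExactOn (Φ : AbFunctor.{u, v} R) (P : NilpAlg R → Prop) : Prop :=
  ∀ {N₁ N₂ N₃ : NilpAlg R}, P N₁ → P N₂ → P N₃ →
    ∀ (i : N₁.carrier →ₙₐ[R] N₂.carrier) (p : N₂.carrier →ₙₐ[R] N₃.carrier), IsSES i p →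
      Function.Injective (Φ.map i) ∧ Function.Surjective (Φ.map p) ∧
      ∀ y : Φ.obj N₂, Φ.map p y = 0 ↔ y ∈ Set.range (Φ.map i)

/-- The additive group underlying `N` is (the additive group of) a `ℚ`-vector space,
i.e. it is uniquely divisible. -/
def IsQVectorSpace (N : Type v) [AddCommGroup N] : Prop :=
  ∀ n : ℤ, n ≠ 0 → Function.Bijective fun x : N => n • x

/-!
Induction on the nilpotency index of `M`. Let `M²` be the span of the products in `M` and
`N₂ = j⁻¹(M²)`, and compare the short exact sequences `0 → N₂ → N → N/N₂ → 0` and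
`0 → M² → M → M/M² → 0` along `j`. The bottom row consists of `ℚ`-vector spaces (a product
can be divided through one of its factors, so `M²` is divisible), hence `Φ(M²) → Φ(M)` is
injective. The induced map `N/N₂ → M/M²` is injective, and source, target and cokernel have
zero multiplication, so `Φ` of it is injective. `M²` has smaller nilpotency index, so
`Φ(N₂) → Φ(M²)` is injective by induction, and a diagram chase through the right exact top
row finishes.
-/

section nprod

variable {A : Type*}

theorem map_nprod {B F : Type*} [Mul A] [Mul B] [FunLike F A B] [MulHomClass F A B] (g : F) :
    ∀ (n : ℕ) (f : Fin (n + 1) → A), g (nprod n f) = nprod n fun i => g (f i)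
  | 0, _ => rfl
  | n + 1, f => by
    show g (f 0 * nprod n fun i => f i.succ) = g (f 0) * nprod n fun i => g (f i.succ)
    rw [map_mul, map_nprod g n]

theorem nprod_eq_zero_of_le [MulZeroClass A] {k m : ℕ} (hkm : k ≤ m)
    (hk : ∀ f : Fin (k + 1) → A, nprod k f = 0) (f : Fin (m + 1) → A) : nprod m f = 0 := by
  induction m, hkm using Nat.le_induction with
  | base => exact hk f
  | succ m _ ih =>
    show f 0 * nprod m (fun i => f i.succ) = 0
    rw [ih, mul_zero]

end nprod

section nprodSpan

variable (R) (A : Type*) [NonUnitalSemiring A] [Module R A]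

/-- Spanned by the products of `m + 1` factors, following the indexing of `nprod`;
`nprodSpan R A 1` is `A²`. -/
def nprodSpan (m : ℕ) : Submodule R A :=
  Submodule.span R (Set.range (nprod m))

variable {R A}

theorem nprod_mem_nprodSpan (m : ℕ) (f : Fin (m + 1) → A) : nprod m f ∈ nprodSpan R A m :=
  Submodule.subset_span ⟨f, rfl⟩

theorem eq_zero_of_mem_nprodSpan {k m : ℕ} (hkm : k ≤ m)
    (hk : ∀ f : Fin (k + 1) → A, nprod k f = 0) {a : A} (ha : a ∈ nprodSpan R A m) :
    a = 0 := by
  have hbot : nprodSpan R A m = ⊥ :=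
    Submodule.span_eq_bot.2 (by rintro _ ⟨f, rfl⟩; exact nprod_eq_zero_of_le hkm hk f)
  simpa [hbot] using ha

theorem mul_mem_nprodSpan_one (a b : A) : a * b ∈ nprodSpan R A 1 :=
  nprod_mem_nprodSpan 1 (Fin.cons a fun _ => b)

variable [SMulCommClass R A A]

theorem mul_mem_nprodSpan_succ (b : A) {q : ℕ} {a : A} (ha : a ∈ nprodSpan R A q) :
    b * a ∈ nprodSpan R A (q + 1) := by
  induction ha using Submodule.span_induction with
  | mem x hx =>
    obtain ⟨f, rfl⟩ := hx
    exact nprod_mem_nprodSpan (q + 1) (Fin.cons b f)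
  | zero => rw [mul_zero]; exact zero_mem _
  | add x y _ _ hx hy => rw [mul_add]; exact add_mem hx hy
  | smul r x _ hx => rw [mul_smul_comm]; exact Submodule.smul_mem _ r hx

variable [IsScalarTower R A A]

theorem mul_mem_nprodSpan_add_two {q : ℕ} {a b : A} (ha : a ∈ nprodSpan R A 1)
    (hb : b ∈ nprodSpan R A q) : a * b ∈ nprodSpan R A (q + 2) := by
  induction ha using Submodule.span_induction with
  | mem x hx =>
    obtain ⟨f, rfl⟩ := hx
    show f 0 * nprod 0 (fun i => f i.succ) * b ∈ _
    rw [mul_assoc]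
    exact mul_mem_nprodSpan_succ _ (mul_mem_nprodSpan_succ _ hb)
  | zero => rw [zero_mul]; exact zero_mem _
  | add x y _ _ hx hy => rw [add_mul]; exact add_mem hx hy
  | smul r x _ hx => rw [smul_mul_assoc]; exact Submodule.smul_mem _ r hx

theorem nprod_mem_nprodSpan_of_forall_mem_one :
    ∀ (n : ℕ) (f : Fin (n + 1) → A), (∀ i, f i ∈ nprodSpan R A 1) →
      nprod n f ∈ nprodSpan R A (2 * n + 1)
  | 0, _, hf => hf 0
  | n + 1, _, hf => mul_mem_nprodSpan_add_two (hf 0)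
      (nprod_mem_nprodSpan_of_forall_mem_one n _ fun i => hf i.succ)

theorem nprod_eq_zero_of_forall_mem_nprodSpan_one {k : ℕ}
    (hk : ∀ f : Fin (k + 2) → A, nprod (k + 1) f = 0) (f : Fin (k + 1) → A)
    (hf : ∀ i, f i ∈ nprodSpan R A 1) : nprod k f = 0 :=
  eq_zero_of_mem_nprodSpan (by omega) hk (nprod_mem_nprodSpan_of_forall_mem_one k f hf)

end nprodSpan

section IsQVectorSpace

variable {V : Type*} [AddCommGroup V] [Module R V] {S : Submodule R V}

def Submodule.IsDivisible (S : Submodule R V) : Prop :=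
  ∀ n : ℤ, n ≠ 0 → ∀ x ∈ S, ∃ y ∈ S, n • y = x

theorem IsQVectorSpace.submodule (hV : IsQVectorSpace V) (hS : S.IsDivisible) :
    IsQVectorSpace S := fun n hn =>
  ⟨fun _ _ h => Subtype.ext ((hV n hn).1 (congrArg Subtype.val h)), fun x =>
    let ⟨y, hy, hyx⟩ := hS n hn x x.2
    ⟨⟨y, hy⟩, Subtype.ext hyx⟩⟩

theorem IsQVectorSpace.quotient (hV : IsQVectorSpace V) (hS : S.IsDivisible) :
    IsQVectorSpace (V ⧸ S) := by
  intro n hn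
  refine ⟨fun a b hab => ?_, fun a => ?_⟩
  · obtain ⟨x, rfl⟩ := S.mkQ_surjective a
    obtain ⟨y, rfl⟩ := S.mkQ_surjective b
    have hxy : n • (x - y) ∈ S := by
      simp only [← map_zsmul] at hab
      rw [smul_sub]
      exact (Submodule.Quotient.eq S).1 hab
    obtain ⟨z, hz, hzxy⟩ := hS n hn _ hxy
    exact (Submodule.Quotient.eq S).2 ((hV n hn).1 hzxy ▸ hz)
  · obtain ⟨x, rfl⟩ := S.mkQ_surjective a
    obtain ⟨y, rfl⟩ := (hV n hn).2 x
    exact ⟨S.mkQ y, (map_zsmul S.mkQ n y).symm⟩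

end IsQVectorSpace

theorem isDivisible_nprodSpan_one {A : Type*} [NonUnitalRing A] [Module R A]
    [IsScalarTower R A A] [SMulCommClass R A A] (hA : IsQVectorSpace A) :
    (nprodSpan R A 1).IsDivisible := by
  intro n hn x hx
  induction hx using Submodule.span_induction with
  | mem x hx =>
    obtain ⟨f, rfl⟩ := hx
    obtain ⟨a, ha : n • a = f 0⟩ := (hA n hn).2 (f 0)
    refine ⟨a * nprod 0 (fun i => f i.succ), mul_mem_nprodSpan_one _ _, ?_⟩
    rw [← smul_mul_assoc, ha]
    rfl
  | zero => exact ⟨0, zero_mem _, smul_zero n⟩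
  | add x y _ _ hx hy =>
    obtain ⟨a, ha, rfl⟩ := hx
    obtain ⟨b, hb, rfl⟩ := hy
    exact ⟨a + b, add_mem ha hb, smul_add n a b⟩
  | smul r x _ hx =>
    obtain ⟨a, ha, rfl⟩ := hx
    exact ⟨r • a, Submodule.smul_mem _ r ha, smul_comm n r a⟩

namespace NilpAlg

variable (R) in
def ofModule (V : Type u) [AddCommGroup V] [Module R V] : NilpAlg R :=
  letI : NonUnitalCommRing V :=
    { (inferInstance : AddCommGroup V) with
      mul := fun _ _ => 0
      left_distrib := fun _ _ _ => (add_zero 0).symm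
      right_distrib := fun _ _ _ => (add_zero 0).symm
      zero_mul := fun _ => rfl
      mul_zero := fun _ => rfl
      mul_assoc := fun _ _ _ => rfl
      mul_comm := fun _ _ => rfl }
  { carrier := V
    isScalarTower := ⟨fun r _ _ => (smul_zero r).symm⟩
    smulCommClass := ⟨fun r _ _ => smul_zero r⟩
    nilpotent := ⟨1, fun _ => rfl⟩ }

theorem ofModule_mul_eq_zero {V : Type u} [AddCommGroup V] [Module R V]
    (x y : (ofModule R V).carrier) : x * y = 0 := rfl

def ofModuleHom {V W : Type u} [AddCommGroup V] [Module R V] [AddCommGroup W] [Module R W]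
    (f : V →ₗ[R] W) : (ofModule R V).carrier →ₙₐ[R] (ofModule R W).carrier :=
  { f with
    map_zero' := f.map_zero
    map_mul' := fun _ _ => f.map_zero }

theorem isSES_ofModuleHom_mkQ_range {V W : Type u} [AddCommGroup V] [Module R V]
    [AddCommGroup W] [Module R W] {f : V →ₗ[R] W} (hf : Function.Injective f) :
    IsSES (ofModuleHom f) (ofModuleHom (LinearMap.range f).mkQ) :=
  ⟨hf, (LinearMap.range f).mkQ_surjective, LinearMap.exact_map_mkQ_range f⟩

variable (M : NilpAlg R) (S : Submodule R M.carrier)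

abbrev ofSubmodule (hS : ∀ x y : M.carrier, x * y ∈ S) : NilpAlg R where
  carrier := ({ S with mul_mem' := fun _ _ => hS _ _ } : NonUnitalSubalgebra R M.carrier)
  nilpotent :=
    let ⟨k, hk⟩ := M.nilpotent
    ⟨k, fun f =>
      Subtype.ext ((map_nprod (NonUnitalSubalgebraClass.subtype _) k f).trans (hk _))⟩

def subtype (hS : ∀ x y : M.carrier, x * y ∈ S) :
    (ofSubmodule M S hS).carrier →ₙₐ[R] M.carrier :=
  NonUnitalSubalgebraClass.subtype _

def mkQ (hS : ∀ x y : M.carrier, x * y ∈ S) :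
    M.carrier →ₙₐ[R] (ofModule R (M.carrier ⧸ S)).carrier :=
  { S.mkQ with
    map_zero' := S.mkQ.map_zero
    map_mul' := fun x y => (Submodule.Quotient.mk_eq_zero S).2 (hS x y) }

theorem isSES_subtype_mkQ (hS : ∀ x y : M.carrier, x * y ∈ S) :
    IsSES (subtype M S hS) (mkQ M S hS) :=
  ⟨Subtype.val_injective, S.mkQ_surjective, LinearMap.exact_subtype_mkQ S⟩

variable {M S} {N : NilpAlg R} (j : N.carrier →ₙₐ[R] M.carrier)

theorem mul_mem_comap (hS : ∀ x y : M.carrier, x * y ∈ S) (x y : N.carrier) :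
    x * y ∈ S.comap (j : N.carrier →ₗ[R] M.carrier) := by
  simpa using hS (j x) (j y)

def restrict (hS : ∀ x y : M.carrier, x * y ∈ S) :
    (ofSubmodule N _ (mul_mem_comap j hS)).carrier →ₙₐ[R] (ofSubmodule M S hS).carrier :=
  { toFun := fun x => ⟨j x, x.2⟩
    map_smul' := fun r x => Subtype.ext (map_smul j r x.1)
    map_zero' := Subtype.ext (map_zero j)
    map_add' := fun x y => Subtype.ext (map_add j x.1 y.1)
    map_mul' := fun x y => Subtype.ext (map_mul j x.1 y.1) }

theorem restrict_injective (hS : ∀ x y : M.carrier, x * y ∈ S) (hj : Function.Injective j) :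
    Function.Injective (restrict j hS) :=
  fun _ _ h => Subtype.ext (hj (congrArg Subtype.val h))

end NilpAlg

namespace AbFunctor

variable (Φ : AbFunctor.{u, v} R)

theorem map_comp_apply {N₁ N₂ N₃ : NilpAlg R} (f : N₁.carrier →ₙₐ[R] N₂.carrier)
    (g : N₂.carrier →ₙₐ[R] N₃.carrier) (x : Φ.obj N₁) :
    Φ.map (g.comp f) x = Φ.map g (Φ.map f x) := by
  rw [Φ.map_comp]
  rfl

theorem map_injective_of_comm_sq {N₁ N₂ N₃ M₁ M₂ M₃ : NilpAlg R}
    {i : N₁.carrier →ₙₐ[R] N₂.carrier} {p : N₂.carrier →ₙₐ[R] N₃.carrier}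
    {i' : M₁.carrier →ₙₐ[R] M₂.carrier} {p' : M₂.carrier →ₙₐ[R] M₃.carrier}
    {f₁ : N₁.carrier →ₙₐ[R] M₁.carrier} {f₂ : N₂.carrier →ₙₐ[R] M₂.carrier}
    {f₃ : N₃.carrier →ₙₐ[R] M₃.carrier}
    (hexact : ∀ y, Φ.map p y = 0 → y ∈ Set.range (Φ.map i))
    (hf₁ : Function.Injective (Φ.map f₁)) (hi' : Function.Injective (Φ.map i'))
    (hf₃ : Function.Injective (Φ.map f₃))
    (sq₁ : f₂.comp i = i'.comp f₁) (sq₂ : f₃.comp p = p'.comp f₂) :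
    Function.Injective (Φ.map f₂) := by
  rw [injective_iff_map_eq_zero]
  intro y hy
  have hpy : Φ.map p y = 0 :=
    hf₃ (by rw [← map_comp_apply, sq₂, map_comp_apply, hy, map_zero, map_zero])
  obtain ⟨z, rfl⟩ := hexact y hpy
  have hz : Φ.map f₁ z = 0 :=
    hi' (by rw [← map_comp_apply, ← sq₁, map_comp_apply, hy, map_zero])
  rw [hf₁ (hz.trans (map_zero _).symm), map_zero]

variable {Φ}

theorem map_injective_of_map_restrict_injective (hre : Φ.RightExact)
    (hQ : Φ.ExactOn fun N => IsQVectorSpace N.carrier)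
    (hsq : Φ.ExactOn fun N => ∀ x y : N.carrier, x * y = 0) {N M : NilpAlg R}
    (j : N.carrier →ₙₐ[R] M.carrier) (hM : IsQVectorSpace M.carrier)
    {S : Submodule R M.carrier}
    (hS : ∀ x y : M.carrier, x * y ∈ S) (hSdiv : S.IsDivisible)
    (hrestrict : Function.Injective (Φ.map (NilpAlg.restrict j hS))) :
    Function.Injective (Φ.map j) := by
  let T := S.comap (j : N.carrier →ₗ[R] M.carrier)
  have hT := NilpAlg.mul_mem_comap j hS
  let jbar := T.mapQ S (j : N.carrier →ₗ[R] M.carrier) fun _ hx => hx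
  have hjbar : Function.Injective jbar := by
    rw [← LinearMap.ker_eq_bot, Submodule.ker_mapQ, Submodule.mkQ_map_self]
  refine Φ.map_injective_of_comm_sq (i := NilpAlg.subtype N T hT) (p := NilpAlg.mkQ N T hT)
    (i' := NilpAlg.subtype M S hS) (p' := NilpAlg.mkQ M S hS)
    (f₃ := NilpAlg.ofModuleHom jbar)
    (fun y => ((hre _ _ (NilpAlg.isSES_subtype_mkQ N T hT)).2 y).1) hrestrict ?_ ?_ rfl rfl
  · exact (hQ (hM.submodule hSdiv) hM (hM.quotient hSdiv) _ _
      (NilpAlg.isSES_subtype_mkQ M S hS)).1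
  · exact (hsq NilpAlg.ofModule_mul_eq_zero NilpAlg.ofModule_mul_eq_zero
      NilpAlg.ofModule_mul_eq_zero _ _ (NilpAlg.isSES_ofModuleHom_mkQ_range hjbar)).1

theorem map_injective_of_forall_eq_zero
    (hsq : Φ.ExactOn fun N => ∀ x y : N.carrier, x * y = 0) {N M : NilpAlg R}
    (j : N.carrier →ₙₐ[R] M.carrier) (hj : Function.Injective j)
    (hM : ∀ m : M.carrier, m = 0) : Function.Injective (Φ.map j) :=
  (hsq (fun _ _ => hj ((hM _).trans (hM _).symm)) (fun _ _ => hM _) (fun _ _ => hM _)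
    j (NonUnitalAlgHom.id R M.carrier)
    ⟨hj, Function.surjective_id, fun x =>
      ⟨fun _ => ⟨0, (hM _).trans (hM x).symm⟩, fun _ => hM x⟩⟩).1

theorem map_injective_of_nprod_eq_zero (hre : Φ.RightExact)
    (hQ : Φ.ExactOn fun N => IsQVectorSpace N.carrier)
    (hsq : Φ.ExactOn fun N => ∀ x y : N.carrier, x * y = 0) :
    ∀ (k : ℕ) {N M : NilpAlg R} (j : N.carrier →ₙₐ[R] M.carrier),
      (∀ f : Fin (k + 1) → M.carrier, nprod k f = 0) → IsQVectorSpace M.carrier →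
      Function.Injective j → Function.Injective (Φ.map j)
  | 0, _, _, j, hk, _, hj => map_injective_of_forall_eq_zero hsq j hj fun m => hk fun _ => m
  | k + 1, _, _, j, hk, hM, hj =>
    have hdiv := isDivisible_nprodSpan_one hM
    map_injective_of_map_restrict_injective hre hQ hsq j hM mul_mem_nprodSpan_one hdiv <|
      map_injective_of_nprod_eq_zero hre hQ hsq k _
        (fun f => Subtype.ext <| (map_nprod (NilpAlg.subtype _ _ _) k f).trans <|
          nprod_eq_zero_of_forall_mem_nprodSpan_one hk _ fun i => (f i).2)
        (hM.submodule hdiv) (NilpAlg.restrict_injective j _ hj)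

end AbFunctor

/-- `j : N → M` stands for the canonical map `N → N ⊗_ℤ ℚ`, `n ↦ n ⊗ 1`. -/
theorem stmt4_general (R : Type u) [CommRing R]
    (Φ : AbFunctor.{u, v} R) (hre : Φ.RightExact)
    (hQ : Φ.ExactOn fun N => IsQVectorSpace N.carrier)
    (hsq : Φ.ExactOn fun N => ∀ x y : N.carrier, x * y = 0)
    (N : NilpAlg R)
    (M : NilpAlg R) (j : N.carrier →ₙₐ[R] M.carrier)
    (hMQ : IsQVectorSpace M.carrier)
    (hj : Function.Injective j) :
    Function.Injective (Φ.map j) :=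
  let ⟨k, hk⟩ := M.nilpotent
  Φ.map_injective_of_nprod_eq_zero hre hQ hsq k j hk hMQ hj

/-- The scalar extension `N ⊗_ℤ ℚ`, together with the canonical map
`j : N → N ⊗_ℤ ℚ`, `n ↦ n ⊗ 1`, is encoded by its characterizing properties among
nilpotent `R`-algebras: `j` is injective (`N` being ℤ-torsion-free), the target is a
`ℚ`-vector space, and every element of the target is an integer-denominator multiple
of an element in the image of `j`. -/
theorem stmt4 (R : Type u) [CommRing R]
    (hR : ∀ (n : ℤ) (r : R), n ≠ 0 → n • r = 0 → r = 0)
    (Φ : AbFunctor.{u, v} R) (hre : Φ.RightExact)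
    (hQ : Φ.ExactOn fun N => IsQVectorSpace N.carrier)
    (hsq : Φ.ExactOn fun N => ∀ x y : N.carrier, x * y = 0)
    (N : NilpAlg R) (htf : ∀ (n : ℤ) (x : N.carrier), n ≠ 0 → n • x = 0 → x = 0)
    (M : NilpAlg R) (j : N.carrier →ₙₐ[R] M.carrier)
    (hMQ : IsQVectorSpace M.carrier)
    (hj : Function.Injective j)
    (hdense : ∀ m : M.carrier, ∃ (n : ℤ) (x : N.carrier), n ≠ 0 ∧ n • m = j x) :
    Function.Injective (Φ.map j) :=
  stmt4_general R Φ hre hQ hsq N M j hMQ hj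
end

section
/- Let R be a commutative ring whose additive group is ℤ-torsion-free, let d ≥ 1, and let f be a formal power series in d variables x₁,…,x_d with coefficients in R ⊗_ℤ ℚ. Suppose that for every d-tuple (g₁,…,g_d) of one-variable formal power series with integer coefficients and zero constant term, the power series f(g₁(x),…,g_d(x)) obtained by substitution has all of its coefficients in the image of the canonical map R → R ⊗_ℤ ℚ. Then every coefficient of f lies in the image of R → R ⊗_ℤ ℚ. -/
/-!
Substituting the monomials `xᵢ ↦ x ^ (C ^ d + C ^ i)` with `C` larger than `|m| = m₁ + ⋯ + m_d`
isolates the coefficient of `x^m` in one coefficient of the substituted series: the weight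
`∑ mᵢ (C ^ d + C ^ i)` is the base-`C` number with digits `m₁, …, m_d, |m|`, and the
digit `|m|` in front rules out every exponent vector of larger total degree.
-/

open scoped TensorProduct

/-- The `n`-th coefficient of the substitution `f(G₁(x), …, G_d(x))` of a `d`-tuple `G`
of one-variable power series into a `d`-variable power series `f`.  When every `Gᵢ` has
zero constant term, the product `∏ᵢ Gᵢ^(mᵢ)` has order at least `m₁ + ⋯ + m_d`, so only
exponent vectors `m` with all entries `≤ n` can contribute to the `n`-th coefficient,
and the following finite sum computes it. -/
noncomputable def substCoeff {S : Type*} [CommRing S] {d : ℕ}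
    (f : MvPowerSeries (Fin d) S) (G : Fin d → PowerSeries S) (n : ℕ) : S :=
  ∑ m : Fin d → Fin (n + 1),
    MvPowerSeries.coeff (Finsupp.equivFunOnFinite.symm fun i => (m i : ℕ)) f *
      PowerSeries.coeff n (∏ i, G i ^ (m i : ℕ))

open Finset

section Kronecker

variable {C d : ℕ}

theorem sum_mul_pow_lt_pow (a : Fin d → ℕ) (ha : ∀ i, a i < C) :
    ∑ i, a i * C ^ (i : ℕ) < C ^ d :=
  (finFunctionFinEquiv fun i => (⟨a i, ha i⟩ : Fin C)).isLt

theorem eq_of_sum_mul_pow_eq {a b : Fin d → ℕ} (ha : ∀ i, a i < C) (hb : ∀ i, b i < C)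
    (h : ∑ i, a i * C ^ (i : ℕ) = ∑ i, b i * C ^ (i : ℕ)) : a = b := by
  have := finFunctionFinEquiv.injective
    (Fin.ext h : finFunctionFinEquiv (fun i => (⟨a i, ha i⟩ : Fin C)) =
      finFunctionFinEquiv fun i => ⟨b i, hb i⟩)
  funext i
  exact congrArg Fin.val (congrFun this i)

theorem sum_mul_pow_add_pow_eq (a : Fin d → ℕ) :
    ∑ i, a i * (C ^ d + C ^ (i : ℕ)) =
      ∑ i : Fin (d + 1), (Fin.snoc a (∑ j, a j) : Fin (d + 1) → ℕ) i * C ^ (i : ℕ) := by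
  simp only [Fin.sum_univ_castSucc, Fin.snoc_castSucc, Fin.snoc_last, Fin.val_castSucc,
    Fin.val_last, mul_add, sum_add_distrib, sum_mul]
  ring

theorem snoc_sum_lt {a : Fin d → ℕ} (ha : ∑ j, a j < C) (i : Fin (d + 1)) :
    (Fin.snoc a (∑ j, a j) : Fin (d + 1) → ℕ) i < C := by
  refine Fin.lastCases ?_ (fun i => ?_) i
  · simpa only [Fin.snoc_last] using ha
  · rw [Fin.snoc_castSucc]
    exact (single_le_sum (fun j _ => Nat.zero_le (a j)) (mem_univ i)).trans_lt ha

theorem eq_of_sum_mul_pow_add_pow_eq {m m₀ : Fin d → ℕ} (hC : ∑ i, m₀ i < C)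
    (h : ∑ i, m i * (C ^ d + C ^ (i : ℕ)) = ∑ i, m₀ i * (C ^ d + C ^ (i : ℕ))) : m = m₀ := by
  have hm : ∑ i, m i < C := by
    have hlt : ∑ i, m i * (C ^ d + C ^ (i : ℕ)) < C ^ (d + 1) := calc
      _ = ∑ i, m₀ i * (C ^ d + C ^ (i : ℕ)) := h
      _ = _ := sum_mul_pow_add_pow_eq m₀
      _ < C ^ (d + 1) := sum_mul_pow_lt_pow _ (snoc_sum_lt hC)
    have hle : (∑ i, m i) * C ^ d ≤ ∑ i, m i * (C ^ d + C ^ (i : ℕ)) := by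
      rw [sum_mul]
      exact sum_le_sum fun i _ => Nat.mul_le_mul_left _ (Nat.le_add_right _ _)
    rw [pow_succ'] at hlt
    exact lt_of_mul_lt_mul_right (hle.trans_lt hlt) (Nat.zero_le _)
  rw [sum_mul_pow_add_pow_eq, sum_mul_pow_add_pow_eq] at h
  simpa only [Fin.init_snoc] using
    congrArg Fin.init (eq_of_sum_mul_pow_eq (snoc_sum_lt hm) (snoc_sum_lt hC) h)

end Kronecker

theorem substCoeff_X_pow {S : Type*} [CommRing S] {d n : ℕ} (f : MvPowerSeries (Fin d) S)
    {e : Fin d → ℕ} (he : ∀ i, 0 < e i) {m₀ : Fin d →₀ ℕ} (hn : ∑ i, m₀ i * e i = n)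
    (huniq : ∀ m : Fin d → ℕ, ∑ i, m i * e i = n → m = m₀) :
    substCoeff f (fun i => PowerSeries.X ^ e i) n = MvPowerSeries.coeff m₀ f := by
  have hprod (m : Fin d → ℕ) : ∏ i, ((PowerSeries.X : PowerSeries S) ^ e i) ^ m i =
      PowerSeries.X ^ ∑ i, m i * e i := by
    simp only [← pow_mul, mul_comm (e _)]
    exact prod_pow_eq_pow_sum _ _ _
  have hle (i : Fin d) : m₀ i < n + 1 :=
    Nat.lt_succ_of_le <| (Nat.le_mul_of_pos_right _ (he i)).trans <|
      hn ▸ single_le_sum (f := fun j => m₀ j * e j) (fun j _ => Nat.zero_le _) (mem_univ i)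
  unfold substCoeff
  rw [sum_eq_single (fun i => ⟨m₀ i, hle i⟩)]
  · rw [hprod, PowerSeries.coeff_X_pow, if_pos hn.symm, mul_one]
    exact congrArg _ (Finsupp.equivFunOnFinite_symm_coe m₀)
  · intro m _ hm
    rw [hprod, PowerSeries.coeff_X_pow, if_neg, mul_zero]
    intro hsum
    exact hm (funext fun i => Fin.ext (congrFun (huniq _ hsum.symm) i))
  · exact fun h => absurd (mem_univ _) h

theorem stmt8_general (R : Type*) [CommRing R]
    (d : ℕ) (f : MvPowerSeries (Fin d) (R ⊗[ℤ] ℚ))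
    (H : ∀ g : Fin d → PowerSeries ℤ, (∀ i, PowerSeries.constantCoeff (g i) = 0) →
      ∀ n : ℕ,
        substCoeff f (fun i => PowerSeries.map (Int.castRingHom (R ⊗[ℤ] ℚ)) (g i)) n
          ∈ Set.range (Algebra.TensorProduct.includeLeftRingHom : R →+* R ⊗[ℤ] ℚ)) :
    ∀ m : Fin d →₀ ℕ, MvPowerSeries.coeff m f
      ∈ Set.range (Algebra.TensorProduct.includeLeftRingHom : R →+* R ⊗[ℤ] ℚ) := by
  intro m₀
  set C := ∑ i, m₀ i + 1
  set e : Fin d → ℕ := fun i => C ^ d + C ^ (i : ℕ)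
  have he (i : Fin d) : 0 < e i := Nat.add_pos_right _ (pow_pos (Nat.succ_pos _) _)
  have hsubst := H (fun i => PowerSeries.X ^ e i)
    (fun i => by rw [map_pow, PowerSeries.constantCoeff_X, zero_pow (he i).ne']) (∑ i, m₀ i * e i)
  simp only [map_pow, PowerSeries.map_X] at hsubst
  rwa [substCoeff_X_pow f he rfl
    fun m hm => eq_of_sum_mul_pow_add_pow_eq (Nat.lt_succ_self _) hm] at hsubst

/-- Let `R` be a commutative ring whose additive group is ℤ-torsion-free and let `f` be
a power series in `d ≥ 1` variables over `R ⊗_ℤ ℚ`.  If for every `d`-tuple of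
one-variable integral power series with zero constant term the substituted series has
all coefficients in the image of `R → R ⊗_ℤ ℚ`, then all coefficients of `f` lie in the
image of `R → R ⊗_ℤ ℚ`. -/
theorem stmt8 (R : Type*) [CommRing R]
    (hR : ∀ (n : ℤ) (r : R), n ≠ 0 → n • r = 0 → r = 0)
    (d : ℕ) (hd : 1 ≤ d) (f : MvPowerSeries (Fin d) (R ⊗[ℤ] ℚ))
    (H : ∀ g : Fin d → PowerSeries ℤ, (∀ i, PowerSeries.constantCoeff (g i) = 0) →
      ∀ n : ℕ,
        substCoeff f (fun i => PowerSeries.map (Int.castRingHom (R ⊗[ℤ] ℚ)) (g i)) n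
          ∈ Set.range (Algebra.TensorProduct.includeLeftRingHom : R →+* R ⊗[ℤ] ℚ)) :
    ∀ m : Fin d →₀ ℕ, MvPowerSeries.coeff m f
      ∈ Set.range (Algebra.TensorProduct.includeLeftRingHom : R →+* R ⊗[ℤ] ℚ) :=
  stmt8_general R d f H
end

section
/- For every natural number m, let P_m(λ) = Σ_{k=0}^{m} binom(m,k)² λ^k ∈ ℤ[λ]. Then every coefficient of the polynomial 4λ(1−λ)·P_m''(λ) + 4(1−2λ)·P_m'(λ) − P_m(λ) in ℤ[λ] is divisible by 2m+1. -/
/-!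
The coefficient of `λⁿ` in `4λ(1−λ)P'' + 4(1−2λ)P' − P` is `4(n+1)² a_{n+1} − (2n+1)² a_n`,
where `a_k = binom(m,k)²`. Factoring this difference of squares and using
`(k+1)·binom(m,k+1) = (m−k)·binom(m,k)`, one factor becomes `(2m+1)·binom(m,n)`.
-/

open Polynomial

/-- `P_m(λ) = Σ_{k=0}^{m} binom(m,k)² λ^k ∈ ℤ[λ]`. -/
noncomputable def Pm (m : ℕ) : Polynomial ℤ :=
  ∑ k ∈ Finset.range (m + 1), C ((m.choose k : ℤ) ^ 2) * X ^ k

lemma coeff_Pm (m k : ℕ) : (Pm m).coeff k = (m.choose k : ℤ) ^ 2 := by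
  rw [Pm, finsetSum_coeff]
  simp only [coeff_C_mul_X_pow]
  rw [Finset.sum_ite_eq (Finset.range (m + 1)) k]
  rcases le_or_gt k m with h | h
  · simp [Nat.lt_succ_iff.mpr h]
  · simp [Nat.choose_eq_zero_of_lt h]

namespace Polynomial

variable {R : Type*} [CommRing R]

lemma coeff_X_mul_derivative (p : R[X]) (n : ℕ) :
    (X * derivative p).coeff n = n * p.coeff n := by
  cases n with
  | zero => simp
  | succ n => rw [coeff_X_mul, coeff_derivative]; push_cast; ring

lemma coeff_legendre_operator (p : R[X]) (n : ℕ) :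
    (4 * (X * (1 - X)) * derivative (derivative p) + 4 * (1 - 2 * X) * derivative p - p).coeff n
      = 4 * (n + 1) ^ 2 * p.coeff (n + 1) - (2 * n + 1) ^ 2 * p.coeff n := by
  have h_divergence_form : 4 * (X * (1 - X)) * derivative (derivative p) + 4 * (1 - 2 * X) * derivative p
      = C 4 * derivative (X * derivative p - X * (X * derivative p)) := by
    simp only [derivative_sub, derivative_mul, derivative_X, map_ofNat]
    ring
  rw [h_divergence_form, coeff_sub, coeff_C_mul, coeff_derivative, coeff_sub, coeff_X_mul_derivative,
    coeff_X_mul, coeff_X_mul_derivative]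
  push_cast
  ring

end Polynomial

lemma Nat.cast_choose_succ_right_mul_eq (m n : ℕ) :
    (m.choose (n + 1) : ℤ) * (n + 1) = m.choose n * (m - n) := by
  rcases le_or_gt n m with h | h
  · rw [← Nat.cast_sub h]
    exact_mod_cast Nat.choose_succ_right_eq m n
  · simp [Nat.choose_eq_zero_of_lt h, Nat.choose_eq_zero_of_lt (Nat.lt_succ_of_lt h)]

lemma two_mul_add_one_dvd_choose_sq_sub (m n : ℕ) :
    (2 * m + 1 : ℤ) ∣
      4 * (n + 1) ^ 2 * (m.choose (n + 1) : ℤ) ^ 2 - (2 * n + 1) ^ 2 * (m.choose n : ℤ) ^ 2 :=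
  ⟨(2 * m - 4 * n - 1) * (m.choose n : ℤ) ^ 2, by
    linear_combination (4 * ((m.choose (n + 1) : ℤ) * (n + 1) + m.choose n * (m - n)))
      * Nat.cast_choose_succ_right_mul_eq m n⟩

/-- Every coefficient of `4λ(1−λ)·P_m″(λ) + 4(1−2λ)·P_m′(λ) − P_m(λ)` is divisible by
`2m+1`. -/
theorem stmt12 (m : ℕ) (n : ℕ) :
    (2 * m + 1 : ℤ) ∣
      (4 * (X * (1 - X)) * derivative (derivative (Pm m))
        + 4 * (1 - 2 * X) * derivative (Pm m) - Pm m).coeff n := by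
  rw [coeff_legendre_operator, coeff_Pm, coeff_Pm]
  exact two_mul_add_one_dvd_choose_sq_sub m n
end
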